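/- arXiv:1601.03322 — 7 statements merged into one kernel-verified Lean document; each statement's English description precedes it below -/
import Mathlib

section
/- Let q be a prime power, n ≥ 1, and let S be an F_q-bilinear multiplication on F_{q^n}. Then the rank of the matrix M(S) equals the minimum natural number r for which there exist F_q-linear maps u_1, …, u_r, v_1, …, v_r : F_{q^n} → F_{q^n} with S(x,y) = Σ_{i=1}^{r} u_i(x)·v_i(y) for all x, y ∈ F_{q^n} (the product on the right being multiplication in F_{q^n}). -/
/-- `M` is the matrix of the multiplication `S`, i.e. `S x y = ∑_{i,j} M i j * x^{q^i} * y^{q^j}`. -/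
def IsMatrixOf (q n : ℕ) (K : Type) [Field K]
    (S : K → K → K) (M : Matrix (Fin n) (Fin n) K) : Prop :=
  ∀ x y : K, S x y = ∑ i : Fin n, ∑ j : Fin n, M i j * x ^ q ^ (i : ℕ) * y ^ q ^ (j : ℕ)

/-!
The Frobenius powers `x ↦ x ^ q ^ i`, `i < n`, are `K`-linearly independent `F`-linear maps
(Dedekind), and `n = dim_K End_F(K)`, so they form a `K`-basis of `End_F(K)`. Expanding the
`uₖ, vₖ` of a decomposition `S(x,y) = ∑ₖ uₖ(x) vₖ(y)` in this basis gives a factorization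
`M(S) = A B` through `K^r`, and conversely; the coefficient matrix of `S` is unique by linear
independence. Hence the admissible `r` are exactly those with `rank M(S) ≤ r`.
-/

open Module

namespace Matrix

theorem exists_eq_mul_of_rank {m n K : Type*} [Fintype n] [Field K] (M : Matrix m n K) :
    ∃ (A : Matrix m (Fin M.rank) K) (B : Matrix (Fin M.rank) n K), M = A * B := by
  classical
  let e : LinearMap.range M.mulVecLin ≃ₗ[K] (Fin M.rank → K) :=
    (finBasisOfFinrankEq K _ rfl).equivFun
  refine ⟨LinearMap.toMatrix' ((LinearMap.range M.mulVecLin).subtype ∘ₗ e.symm.toLinearMap),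
    LinearMap.toMatrix' (e.toLinearMap ∘ₗ M.mulVecLin.rangeRestrict), ?_⟩
  have hfactor : ((LinearMap.range M.mulVecLin).subtype ∘ₗ e.symm.toLinearMap) ∘ₗ
      (e.toLinearMap ∘ₗ M.mulVecLin.rangeRestrict) = M.mulVecLin :=
    LinearMap.ext fun x => by simp
  rw [← LinearMap.toMatrix'_comp, hfactor]
  exact (LinearMap.toMatrix'_toLin' M).symm

theorem rank_eq_sInf_eq_mul {m n K : Type*} [Fintype n] [Field K] (M : Matrix m n K) :
    M.rank = sInf {r | ∃ (A : Matrix m (Fin r) K) (B : Matrix (Fin r) n K), M = A * B} := by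
  refine le_antisymm (le_csInf ⟨_, M.exists_eq_mul_of_rank⟩ ?_)
    (Nat.sInf_le M.exists_eq_mul_of_rank)
  rintro r ⟨A, B, rfl⟩
  exact (rank_mul_le_right A B).trans ((rank_le_card_height B).trans (Fintype.card_fin r).le)

end Matrix

namespace Module.Basis

variable {F K ι : Type*} [CommRing F] [CommRing K] [Algebra F K] [Fintype ι]
  (b : Basis ι K (K →ₗ[F] K))

theorem sum_repr_mul_apply (f : K →ₗ[F] K) (x : K) : ∑ i, b.repr f i * b i x = f x := by
  calc ∑ i, b.repr f i * b i x = (∑ i, b.repr f i • b i) x := by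
        simp only [LinearMap.coe_sum, Finset.sum_apply, LinearMap.smul_apply, smul_eq_mul]
    _ = f x := by rw [b.sum_repr]

theorem sum_apply_mul_apply {r : ℕ} (u v : Fin r → K →ₗ[F] K) (x y : K) :
    ∑ k, u k x * v k y = ∑ i, ∑ j, (Matrix.of (fun i k => b.repr (u k) i) *
      Matrix.of (fun k j => b.repr (v k) j)) i j * b i x * b j y := by
  simp only [← b.sum_repr_mul_apply (u _) x, ← b.sum_repr_mul_apply (v _) y, Finset.sum_mul_sum]
  simp only [Matrix.mul_apply, Matrix.of_apply, Finset.sum_mul]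
  rw [Finset.sum_comm]
  refine Finset.sum_congr rfl fun i _ => ?_
  rw [Finset.sum_comm]
  exact Finset.sum_congr rfl fun j _ => Finset.sum_congr rfl fun k _ => by ring

theorem eq_zero_of_forall_sum_mul_apply_eq_zero {c : ι → K} (h : ∀ x, ∑ i, c i * b i x = 0) :
    c = 0 := by
  refine funext (Fintype.linearIndependent_iff.mp b.linearIndependent c (LinearMap.ext fun x => ?_))
  simpa only [LinearMap.coe_sum, Finset.sum_apply, LinearMap.smul_apply, smul_eq_mul,
    LinearMap.zero_apply] using h x

theorem matrix_eq_of_forall_sum_sum_mul_apply_eq {C D : Matrix ι ι K}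
    (h : ∀ x y, ∑ i, ∑ j, C i j * b i x * b j y = ∑ i, ∑ j, D i j * b i x * b j y) : C = D := by
  suffices hrow : ∀ y i, ∑ j, (C - D) i j * b j y = 0 from
    sub_eq_zero.mp (funext fun i => b.eq_zero_of_forall_sum_mul_apply_eq_zero (hrow · i))
  intro y
  refine congrFun (b.eq_zero_of_forall_sum_mul_apply_eq_zero fun x => ?_)
  rw [← sub_eq_zero.mpr (h x y), ← Finset.sum_sub_distrib]
  refine Finset.sum_congr rfl fun i _ => ?_
  simp only [Finset.sum_mul, ← Finset.sum_sub_distrib, Matrix.sub_apply]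
  exact Finset.sum_congr rfl fun j _ => by ring

theorem exists_sum_apply_mul_apply_iff {S : K → K → K} {M : Matrix ι ι K}
    (hM : ∀ x y, S x y = ∑ i, ∑ j, M i j * b i x * b j y) (r : ℕ) :
    (∃ u v : Fin r → K →ₗ[F] K, ∀ x y, S x y = ∑ k, u k x * v k y) ↔
      ∃ (A : Matrix ι (Fin r) K) (B : Matrix (Fin r) ι K), M = A * B := by
  constructor
  · rintro ⟨u, v, huv⟩
    exact ⟨_, _, b.matrix_eq_of_forall_sum_sum_mul_apply_eq fun x y => by
      rw [← hM, huv, b.sum_apply_mul_apply]⟩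
  · rintro ⟨A, B, rfl⟩
    refine ⟨fun k => b.equivFun.symm fun i => A i k, fun k => b.equivFun.symm (B k),
      fun x y => ?_⟩
    have hrepr (a : ι → K) : ⇑(b.repr (b.equivFun.symm a)) = a := by
      rw [← b.equivFun_apply, LinearEquiv.apply_symm_apply]
    simp only [hM, b.sum_apply_mul_apply, hrepr]
    rfl

end Module.Basis

namespace FiniteField

variable (F K : Type*) [Field F] [Fintype F] [Field K] [Algebra F K] [Finite K]

noncomputable def frobeniusPowBasis : Basis (Fin (finrank F K)) K (K →ₗ[F] K) :=
  basisOfLinearIndependentOfCardEqFinrank'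
    (fun i => (frobeniusAlgHom F K ^ (i : ℕ)).toLinearMap)
    ((linearIndependent_algHom_toLinearMap F K K).comp _ (bijective_frobeniusAlgHom_pow F K).1)
    (by rw [Fintype.card_fin, finrank_linearMap_self])

theorem frobeniusPowBasis_apply (i : Fin (finrank F K)) (x : K) :
    frobeniusPowBasis F K i x = x ^ Fintype.card F ^ (i : ℕ) := by
  simp [frobeniusPowBasis, AlgHom.coe_pow, coe_frobeniusAlgHom, pow_iterate]

end FiniteField

theorem stmt2_general (q n : ℕ)
    (F K : Type) [Field F] [Field K] [Algebra F K] [Fintype F] [Fintype K]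
    (hcF : Fintype.card F = q) (hcK : Fintype.card K = q ^ n)
    (S : K →ₗ[F] K →ₗ[F] K) (M : Matrix (Fin n) (Fin n) K)
    (hM : IsMatrixOf q n K (fun x y => S x y) M) :
    M.rank = sInf {r : ℕ | ∃ u v : Fin r → (K →ₗ[F] K),
      ∀ x y : K, S x y = ∑ i : Fin r, u i x * v i y} := by
  subst hcF
  have hfinrank : finrank F K = n :=
    Nat.pow_right_injective Fintype.one_lt_card
      ((card_eq_pow_finrank (K := F) (V := K)).symm.trans hcK)
  let b := (FiniteField.frobeniusPowBasis F K).reindex (finCongr hfinrank)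
  have hb (i : Fin n) (x : K) : b i x = x ^ Fintype.card F ^ (i : ℕ) := by
    simp [b, FiniteField.frobeniusPowBasis_apply]
  have hMb (x y : K) : S x y = ∑ i, ∑ j, M i j * b i x * b j y := by
    simpa only [hb] using hM x y
  rw [M.rank_eq_sInf_eq_mul]
  congr 1
  ext r
  exact (b.exists_sum_apply_mul_apply_iff hMb r).symm

/-- the rank of the matrix `M(S)` of a bilinear multiplication `S` equals the
minimum `r` such that `S(x,y) = ∑_{i=1}^r uᵢ(x)·vᵢ(y)` for `F_q`-linear maps `uᵢ, vᵢ`. -/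
theorem stmt2 (q n : ℕ) (hq : IsPrimePow q) (hn : 1 ≤ n)
    (F K : Type) [Field F] [Field K] [Algebra F K] [Fintype F] [Fintype K]
    (hcF : Fintype.card F = q) (hcK : Fintype.card K = q ^ n)
    (S : K →ₗ[F] K →ₗ[F] K) (M : Matrix (Fin n) (Fin n) K)
    (hM : IsMatrixOf q n K (fun x y => S x y) M) :
    M.rank = sInf {r : ℕ | ∃ u v : Fin r → (K →ₗ[F] K),
      ∀ x y : K, S x y = ∑ i : Fin r, u i x * v i y} :=
  stmt2_general q n F K hcF hcK S M hM
end

section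
/- Let q be a prime power, n ≥ 1, and let S, S' be F_q-bilinear multiplications on F_{q^n} that are strongly isotopic, i.e., S'(F(x),G(y)) = S(x,y) for all x, y for some bijective F_q-linear maps F, G : F_{q^n} → F_{q^n}. Then rank M(S') = rank M(S). -/
/-! The powers `x ↦ x ^ q ^ i`, `i < n`, of the Frobenius of `K / F` are distinct
automorphisms, so by Artin's linear independence of characters they form a `K`-basis of
`End_F(K)`. This makes the matrix of a bilinear multiplication unique, and shows that
precomposing with `F`-linear maps `f`, `g` acts on matrices as `M ↦ Aᵀ * M * B`, where
`(f x) ^ q ^ i = ∑ₛ A i s * x ^ q ^ s` and likewise for `g` and `B`. Hence strongly isotopic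
multiplications have matrices whose ranks bound each other. -/

open Module Matrix

def frobeniusPowers {K : Type*} [Monoid K] (q n : ℕ) (x : K) : Fin n → K :=
  fun i => x ^ q ^ (i : ℕ)

lemma isMatrixOf_iff_dotProduct {q n : ℕ} {K : Type} [Field K] {S : K → K → K}
    {M : Matrix (Fin n) (Fin n) K} :
    IsMatrixOf q n K S M ↔
      ∀ x y, S x y = frobeniusPowers q n x ⬝ᵥ (M *ᵥ frobeniusPowers q n y) := by
  simp only [IsMatrixOf, dotProduct, mulVec, frobeniusPowers, Finset.mul_sum]
  refine forall₂_congr fun x y => ?_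
  simp only [mul_assoc, mul_left_comm]

lemma IsMatrixOf.comp {q n : ℕ} {K : Type} [Field K] {S : K → K → K}
    {M : Matrix (Fin n) (Fin n) K} (hM : IsMatrixOf q n K S M) {f g : K → K}
    {A B : Matrix (Fin n) (Fin n) K}
    (hA : ∀ x, frobeniusPowers q n (f x) = A *ᵥ frobeniusPowers q n x)
    (hB : ∀ y, frobeniusPowers q n (g y) = B *ᵥ frobeniusPowers q n y) :
    IsMatrixOf q n K (fun x y => S (f x) (g y)) (Aᵀ * M * B) := by
  rw [isMatrixOf_iff_dotProduct] at hM ⊢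
  intro x y
  rw [hM, hA, hB, dotProduct_comm, dotProduct_mulVec, ← mulVec_transpose, dotProduct_comm,
    mulVec_mulVec, mulVec_mulVec, Matrix.mul_assoc]

namespace FiniteField

variable (F K : Type*) [Field F] [Fintype F] [Field K] [Algebra F K]

noncomputable def frobeniusPowLinearMap (i : ℕ) : K →ₗ[F] K :=
  (frobeniusAlgHom F K ^ i).toLinearMap

lemma frobeniusPowLinearMap_apply (i : ℕ) (x : K) :
    frobeniusPowLinearMap F K i x = x ^ Fintype.card F ^ i := by
  simp [frobeniusPowLinearMap, AlgHom.coe_pow, coe_frobeniusAlgHom, pow_iterate]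

variable [Finite K]

lemma linearIndependent_frobeniusPowLinearMap :
    LinearIndependent K fun i : Fin (finrank F K) => frobeniusPowLinearMap F K i :=
  (linearIndependent_algHom_toLinearMap F K K).comp _ (bijective_frobeniusAlgHom_pow F K).1

lemma span_frobeniusPowLinearMap :
    Submodule.span K (Set.range fun i : Fin (finrank F K) => frobeniusPowLinearMap F K i) = ⊤ :=
  (linearIndependent_frobeniusPowLinearMap F K).span_eq_top_of_card_eq_finrank'
    (by simp [finrank_linearMap_self])

lemma exists_eq_dotProduct_frobeniusPowers (f : K →ₗ[F] K) :
    ∃ a, ∀ x, f x = a ⬝ᵥ frobeniusPowers (Fintype.card F) (finrank F K) x := by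
  obtain ⟨a, ha⟩ := Submodule.mem_span_range_iff_exists_fun K |>.1
    (span_frobeniusPowLinearMap F K ▸ Submodule.mem_top (x := f))
  refine ⟨a, fun x => ?_⟩
  simp [← ha, LinearMap.sum_apply, frobeniusPowLinearMap_apply, dotProduct, frobeniusPowers]

lemma eq_of_dotProduct_frobeniusPowers_eq {a b : Fin (finrank F K) → K}
    (h : ∀ x : K, a ⬝ᵥ frobeniusPowers (Fintype.card F) (finrank F K) x =
      b ⬝ᵥ frobeniusPowers (Fintype.card F) (finrank F K) x) :
    a = b := by
  refine funext <|
    Fintype.linearIndependent_iffₛ.1 (linearIndependent_frobeniusPowLinearMap F K) a b ?_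
  ext x
  simpa [LinearMap.sum_apply, frobeniusPowLinearMap_apply, dotProduct, frobeniusPowers] using h x

lemma exists_frobeniusPowers_eq_mulVec (f : K →ₗ[F] K) :
    ∃ A, ∀ x, frobeniusPowers (Fintype.card F) (finrank F K) (f x) =
      A *ᵥ frobeniusPowers (Fintype.card F) (finrank F K) x := by
  choose A hA using fun i : Fin (finrank F K) =>
    exists_eq_dotProduct_frobeniusPowers F K ((frobeniusPowLinearMap F K i).comp f)
  exact ⟨Matrix.of A, fun x => funext fun i => by
    simpa [frobeniusPowLinearMap_apply, frobeniusPowers, mulVec] using hA i x⟩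

end FiniteField

open FiniteField

section

variable {F : Type*} [Field F] [Fintype F] {K : Type} [Field K] [Algebra F K] [Finite K]

lemma IsMatrixOf.unique {S : K → K → K} {M N : Matrix (Fin (finrank F K)) (Fin (finrank F K)) K}
    (hM : IsMatrixOf (Fintype.card F) (finrank F K) K S M)
    (hN : IsMatrixOf (Fintype.card F) (finrank F K) K S N) : M = N := by
  rw [isMatrixOf_iff_dotProduct] at hM hN
  have hrow : ∀ x, frobeniusPowers _ _ x ᵥ* M = frobeniusPowers _ _ x ᵥ* N := fun x =>
    eq_of_dotProduct_frobeniusPowers_eq F K fun y => by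
      rw [← dotProduct_mulVec, ← dotProduct_mulVec, ← hM, ← hN]
  refine transpose_inj.1 <| funext fun j => eq_of_dotProduct_frobeniusPowers_eq F K fun x => ?_
  exact (dotProduct_comm _ _).trans ((congrFun (hrow x) j).trans (dotProduct_comm _ _))

lemma IsMatrixOf.rank_le_of_comp {S : K → K → K}
    {M M' : Matrix (Fin (finrank F K)) (Fin (finrank F K)) K} {f g : K →ₗ[F] K}
    (hM : IsMatrixOf (Fintype.card F) (finrank F K) K (fun x y => S (f x) (g y)) M)
    (hM' : IsMatrixOf (Fintype.card F) (finrank F K) K S M') : M.rank ≤ M'.rank := by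
  obtain ⟨A, hA⟩ := exists_frobeniusPowers_eq_mulVec F K f
  obtain ⟨B, hB⟩ := exists_frobeniusPowers_eq_mulVec F K g
  rw [hM.unique (hM'.comp hA hB)]
  exact (rank_mul_le_left _ _).trans (rank_mul_le_right _ _)

end

theorem stmt3_general (q n : ℕ)
    (F K : Type) [Field F] [Field K] [Algebra F K] [Fintype F] [Fintype K]
    (hcF : Fintype.card F = q) (hcK : Fintype.card K = q ^ n)
    (S S' : K →ₗ[F] K →ₗ[F] K) (Fm Gm : K ≃ₗ[F] K)
    (hiso : ∀ x y : K, S' (Fm x) (Gm y) = S x y)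
    (M M' : Matrix (Fin n) (Fin n) K)
    (hM : IsMatrixOf q n K (fun x y => S x y) M)
    (hM' : IsMatrixOf q n K (fun x y => S' x y) M') :
    M'.rank = M.rank := by
  subst hcF
  obtain rfl : finrank F K = n :=
    Nat.pow_right_injective Fintype.one_lt_card (card_eq_pow_finrank.symm.trans hcK)
  apply le_antisymm
  · refine IsMatrixOf.rank_le_of_comp (f := Fm.symm.toLinearMap) (g := Gm.symm.toLinearMap) ?_ hM
    simpa only [LinearEquiv.coe_coe, ← hiso, LinearEquiv.apply_symm_apply] using hM'
  · refine IsMatrixOf.rank_le_of_comp (f := Fm.toLinearMap) (g := Gm.toLinearMap) ?_ hM'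
    simpa only [LinearEquiv.coe_coe, hiso] using hM

/-- strongly isotopic bilinear multiplications have matrices of equal rank. -/
theorem stmt3 (q n : ℕ) (hq : IsPrimePow q) (hn : 1 ≤ n)
    (F K : Type) [Field F] [Field K] [Algebra F K] [Fintype F] [Fintype K]
    (hcF : Fintype.card F = q) (hcK : Fintype.card K = q ^ n)
    (S S' : K →ₗ[F] K →ₗ[F] K) (Fm Gm : K ≃ₗ[F] K)
    (hiso : ∀ x y : K, S' (Fm x) (Gm y) = S x y)
    (M M' : Matrix (Fin n) (Fin n) K)
    (hM : IsMatrixOf q n K (fun x y => S x y) M)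
    (hM' : IsMatrixOf q n K (fun x y => S' x y) M') :
    M'.rank = M.rank :=
  stmt3_general q n F K hcF hcK S S' Fm Gm hiso M M' hM hM'
end

section
/- Let q be a prime power, n ≥ 1, and let S be a presemifield multiplication on F_{q^n} over F_q. Then mrk([S]) = 1 if and only if S is isotopic to the field multiplication (x,y) ↦ x·y on F_{q^n}. -/
/-- `S` and `S'` are isotopic over `F`: there are bijective `F`-linear maps `Fm, Gm, Hm`
with `S'(Fm x, Gm y) = Hm (S x y)` for all `x, y`. -/
def Isotopic (F K : Type) [Field F] [Field K] [Algebra F K]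
    (S S' : K → K → K) : Prop :=
  ∃ Fm Gm Hm : K ≃ₗ[F] K, ∀ x y : K, S' (Fm x) (Gm y) = Hm (S x y)

/-- The set of ranks of matrices of multiplications isotopic to `S`;
`mrk([S])` is its infimum. -/
def mrkSet (q n : ℕ) (F K : Type) [Field F] [Field K] [Algebra F K]
    (S : K → K → K) : Set ℕ :=
  {r | ∃ (S' : K →ₗ[F] K →ₗ[F] K) (M' : Matrix (Fin n) (Fin n) K),
    Isotopic F K S (fun x y => S' x y) ∧
    IsMatrixOf q n K (fun x y => S' x y) M' ∧ M'.rank = r}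

/-!
A rank-one coefficient matrix `a bᵀ` factors the multiplication as `L_a(x) · L_b(y)`, where
`L_a x = ∑ aᵢ x^{q^i}` is a linearized polynomial and hence `F_q`-linear. Having no zero divisors
forces `L_a` and `L_b` to be injective, hence bijective on the finite field, so the multiplication
is isotopic to `x · y`. Conversely `x · y` has the rank-one matrix `E₀₀`, while a matrix of rank
zero would belong to an isotope vanishing identically, although isotopes have no zero divisors.
-/

namespace Matrix

variable {m n K : Type*} [Fintype n] [Field K]

theorem eq_zero_of_rank_eq_zero {M : Matrix m n K} (h : M.rank = 0) : M = 0 := by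
  classical
  rw [rank, Submodule.finrank_eq_zero, LinearMap.range_eq_bot] at h
  ext i j
  simpa [mulVec_single] using congrFun (LinearMap.congr_fun h (Pi.single j 1)) i

theorem exists_eq_vecMulVec_of_rank_eq_one {M : Matrix m n K} (h : M.rank = 1) :
    ∃ a : m → K, ∃ b : n → K, M = vecMulVec a b := by
  classical
  obtain ⟨v, -, hv⟩ := finrank_eq_one_iff'.mp h
  choose c hc using hv
  let col (j : n) : LinearMap.range M.mulVecLin := ⟨_, LinearMap.mem_range_self _ (Pi.single j 1)⟩
  refine ⟨v, fun j => c (col j), ?_⟩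
  ext i j
  have hcol := congrFun (congrArg Subtype.val (hc (col j))) i
  simp only [Submodule.coe_smul, Pi.smul_apply, smul_eq_mul] at hcol
  rw [vecMulVec_apply, mul_comm, hcol]
  simp [col]

theorem rank_vecMulVec_eq_one {a : m → K} {b : n → K} (ha : a ≠ 0) (hb : b ≠ 0) :
    (vecMulVec a b).rank = 1 := by
  obtain ⟨i, hi⟩ := Function.ne_iff.mp ha
  obtain ⟨j, hj⟩ := Function.ne_iff.mp hb
  have hne : (vecMulVec a b).rank ≠ 0 := fun h =>
    mul_ne_zero hi hj congr($(eq_zero_of_rank_eq_zero h) i j)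
  have hle : (vecMulVec a b).rank ≤ 1 := rank_vecMulVec_le a b
  omega

end Matrix

theorem Nat.sInf_eq_one_iff {s : Set ℕ} : sInf s = 1 ↔ 1 ∈ s ∧ 0 ∉ s := by
  constructor
  · intro h
    have hs : s.Nonempty := Set.nonempty_iff_ne_empty.mpr fun he => by simp [he] at h
    exact ⟨h ▸ Nat.sInf_mem hs, fun h0 => by simp [Nat.sInf_eq_zero.mpr (.inl h0)] at h⟩
  · rintro ⟨h1, h0⟩
    have hne : sInf s ≠ 0 := by
      rw [Ne, Nat.sInf_eq_zero, not_or]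
      exact ⟨h0, Set.nonempty_iff_ne_empty.mp ⟨1, h1⟩⟩
    have hle : sInf s ≤ 1 := Nat.sInf_le h1
    omega

section LinearizedPolynomial

variable (F : Type*) {K : Type*} [Field F] [Fintype F] [CommRing K] [Algebra F K] {n : ℕ}

def linearizedMap (a : Fin n → K) : K →ₗ[F] K :=
  ∑ i, LinearMap.mulLeft F (a i) ∘ₗ (FiniteField.frobeniusAlgHom F K).toLinearMap ^ (i : ℕ)

theorem linearizedMap_apply (a : Fin n → K) (x : K) :
    linearizedMap F a x = ∑ i, a i * x ^ Fintype.card F ^ (i : ℕ) := by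
  simp [linearizedMap, Module.End.pow_apply, FiniteField.coe_frobeniusAlgHom]

end LinearizedPolynomial

theorem isMatrixOf_vecMulVec_iff {F : Type*} {K : Type} [Field F] [Fintype F] [Field K]
    [Algebra F K] {n : ℕ} {S : K → K → K} {a b : Fin n → K} :
    IsMatrixOf (Fintype.card F) n K S (Matrix.vecMulVec a b) ↔
      ∀ x y, S x y = linearizedMap F a x * linearizedMap F b y := by
  simp only [IsMatrixOf, linearizedMap_apply, Finset.sum_mul_sum, Matrix.vecMulVec_apply]
  refine forall₂_congr fun x y => Eq.congr_right (Finset.sum_congr rfl fun i _ =>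
    Finset.sum_congr rfl fun j _ => by ring)

section Isotopy

variable {F K : Type} [Field F] [Field K] [Algebra F K] {S S' S'' : K → K → K}

theorem Isotopic.trans (h : Isotopic F K S S') (h' : Isotopic F K S' S'') :
    Isotopic F K S S'' := by
  obtain ⟨A, B, C, hABC⟩ := h
  obtain ⟨A', B', C', hABC'⟩ := h'
  exact ⟨A.trans A', B.trans B', C.trans C', fun x y => by simp [hABC', hABC]⟩

theorem Isotopic.eq_zero_or_eq_zero (h : Isotopic F K S S')
    (hS : ∀ x y, S x y = 0 → x = 0 ∨ y = 0) (x y : K) (hxy : S' x y = 0) : x = 0 ∨ y = 0 := by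
  obtain ⟨A, B, C, hABC⟩ := h
  have hS0 : S (A.symm x) (B.symm y) = 0 := by
    apply C.injective
    rw [← hABC, A.apply_symm_apply, B.apply_symm_apply, hxy, map_zero]
  simpa using hS _ _ hS0

theorem isotopic_mul_of_forall_eq_mul [Finite K] {L L' : K →ₗ[F] K}
    (hS : ∀ x y, S x y = 0 → x = 0 ∨ y = 0) (h : ∀ x y, S x y = L x * L' y) :
    Isotopic F K S (· * ·) := by
  have hL : Function.Injective L := (injective_iff_map_eq_zero L).mpr fun x hx =>
    (hS x 1 (by rw [h, hx, zero_mul])).resolve_right one_ne_zero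
  have hL' : Function.Injective L' := (injective_iff_map_eq_zero L').mpr fun y hy =>
    (hS 1 y (by rw [h, hy, mul_zero])).resolve_left one_ne_zero
  exact ⟨.ofBijective L (Finite.injective_iff_bijective.mp hL),
    .ofBijective L' (Finite.injective_iff_bijective.mp hL'), .refl F K, fun x y => (h x y).symm⟩

theorem zero_notMem_mrkSet {q n : ℕ} (hS : ∀ x y, S x y = 0 → x = 0 ∨ y = 0) :
    0 ∉ mrkSet q n F K S := by
  rintro ⟨S', M', hiso, hM', hrank⟩
  rw [Matrix.eq_zero_of_rank_eq_zero hrank] at hM'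
  simpa using hiso.eq_zero_or_eq_zero hS 1 1 (by simpa using hM' 1 1)

variable [Fintype F] {n : ℕ}

theorem one_mem_mrkSet_of_isotopic_mul (hn : 1 ≤ n) (h : Isotopic F K S (· * ·)) :
    1 ∈ mrkSet (Fintype.card F) n F K S := by
  let e : Fin n → K := Pi.single ⟨0, hn⟩ 1
  have he : e ≠ 0 := Function.ne_iff.mpr ⟨⟨0, hn⟩, by simp [e]⟩
  refine ⟨LinearMap.mul F K, Matrix.vecMulVec e e, h, isMatrixOf_vecMulVec_iff.mpr ?_,
    Matrix.rank_vecMulVec_eq_one he he⟩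
  simp [e, linearizedMap_apply, Pi.single_apply]

theorem isotopic_mul_of_one_mem_mrkSet [Finite K] (hS : ∀ x y, S x y = 0 → x = 0 ∨ y = 0)
    (h : 1 ∈ mrkSet (Fintype.card F) n F K S) : Isotopic F K S (· * ·) := by
  obtain ⟨S', M', hiso, hM', hrank⟩ := h
  obtain ⟨a, b, rfl⟩ := Matrix.exists_eq_vecMulVec_of_rank_eq_one hrank
  exact hiso.trans (isotopic_mul_of_forall_eq_mul (hiso.eq_zero_or_eq_zero hS)
    (isMatrixOf_vecMulVec_iff.mp hM'))

end Isotopy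

theorem stmt6_general (q n : ℕ) (hn : 1 ≤ n)
    (F K : Type) [Field F] [Field K] [Algebra F K] [Fintype F] [Fintype K]
    (hcF : Fintype.card F = q)
    (S : K →ₗ[F] K →ₗ[F] K)
    (hpre : ∀ x y : K, S x y = 0 → x = 0 ∨ y = 0) :
    sInf (mrkSet q n F K (fun x y => S x y)) = 1 ↔
      Isotopic F K (fun x y => S x y) (fun x y => x * y) := by
  subst hcF
  rw [Nat.sInf_eq_one_iff]
  exact ⟨fun h => isotopic_mul_of_one_mem_mrkSet hpre h.1,
    fun h => ⟨one_mem_mrkSet_of_isotopic_mul hn h, zero_notMem_mrkSet hpre⟩⟩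

/-- a presemifield has `mrk([S]) = 1` iff it is isotopic to the field
multiplication `(x,y) ↦ x·y` on `F_{q^n}`. -/
theorem stmt6 (q n : ℕ) (hq : IsPrimePow q) (hn : 1 ≤ n)
    (F K : Type) [Field F] [Field K] [Algebra F K] [Fintype F] [Fintype K]
    (hcF : Fintype.card F = q) (hcK : Fintype.card K = q ^ n)
    (S : K →ₗ[F] K →ₗ[F] K)
    (hpre : ∀ x y : K, S x y = 0 → x = 0 ∨ y = 0) :
    sInf (mrkSet q n F K (fun x y => S x y)) = 1 ↔
      Isotopic F K (fun x y => S x y) (fun x y => x * y) :=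
  stmt6_general q n hn F K hcF S hpre
end

section
/- Let q be a prime power, n ≥ 1, let 1 ≤ k, m ≤ n−1, and let c ∈ F_{q^n} be such that c ≠ x^{q^k − 1} · y^{q^m − 1} for all nonzero x, y ∈ F_{q^n}. Then the generalized twisted field multiplication x∘y := x·y − c·x^{q^k}·y^{q^m} on F_{q^n} has no zero divisors: x∘y = 0 implies x = 0 or y = 0 (i.e., it is a presemifield multiplication over F_q). -/
theorem eq_inv_pow_mul_inv_pow_of_mul_pow_mul_pow_eq_mul {G : Type*} [CommGroupWithZero G]
    {a b : ℕ} (ha : a ≠ 0) (hb : b ≠ 0) {c x y : G} (hx : x ≠ 0) (hy : y ≠ 0)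
    (h : c * x ^ a * y ^ b = x * y) :
    c = x⁻¹ ^ (a - 1) * y⁻¹ ^ (b - 1) := by
  have hpow : c * x ^ a * y ^ b = c * (x ^ (a - 1) * y ^ (b - 1)) * (x * y) := by
    rw [← pow_sub_one_mul ha, ← pow_sub_one_mul hb]
    ac_rfl
  have hone : c * (x ^ (a - 1) * y ^ (b - 1)) = 1 := by
    rw [hpow] at h
    simpa [hx, hy] using h
  rw [inv_pow, inv_pow, ← mul_inv]
  exact eq_inv_of_mul_eq_one_left hone

theorem stmt7_general (q : ℕ) (hq : IsPrimePow q)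
    (K : Type) [Field K]
    (k m : ℕ)
    (c : K)
    (hc : ∀ x y : K, x ≠ 0 → y ≠ 0 → c ≠ x ^ (q ^ k - 1) * y ^ (q ^ m - 1)) :
    ∀ x y : K, x * y - c * x ^ q ^ k * y ^ q ^ m = 0 → x = 0 ∨ y = 0 := by
  intro x y h
  by_contra! ⟨hx, hy⟩
  exact hc x⁻¹ y⁻¹ (inv_ne_zero hx) (inv_ne_zero hy)
    (eq_inv_pow_mul_inv_pow_of_mul_pow_mul_pow_eq_mul (pow_ne_zero k hq.ne_zero)
      (pow_ne_zero m hq.ne_zero) hx hy (sub_eq_zero.mp h).symm)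

/-- the generalized twisted field multiplication
`x ∘ y = x·y − c·x^{q^k}·y^{q^m}` has no zero divisors provided
`c ≠ x^{q^k−1}·y^{q^m−1}` for all nonzero `x, y`. -/
theorem stmt7 (q n : ℕ) (hq : IsPrimePow q) (hn : 1 ≤ n)
    (F K : Type) [Field F] [Field K] [Algebra F K] [Fintype F] [Fintype K]
    (hcF : Fintype.card F = q) (hcK : Fintype.card K = q ^ n)
    (k m : ℕ) (hk1 : 1 ≤ k) (hk2 : k ≤ n - 1) (hm1 : 1 ≤ m) (hm2 : m ≤ n - 1)
    (c : K)
    (hc : ∀ x y : K, x ≠ 0 → y ≠ 0 → c ≠ x ^ (q ^ k - 1) * y ^ (q ^ m - 1)) :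
    ∀ x y : K, x * y - c * x ^ q ^ k * y ^ q ^ m = 0 → x = 0 ∨ y = 0 :=
  stmt7_general q hq K k m c hc
end

section
/- Let q be a prime power, n ≥ 1, and let S be a presemifield multiplication on F_{q^n} over F_q. Then brk(S) = mrk([S^{dtd}]); that is, the minimum r such that some presemifield isotopic to S has multiplication of the form (x,y) ↦ Σ_{i=1}^{r} g_i(f_i(x)·y) with F_q-linear f_i, g_i equals the minimum of rank M(S'') over all F_q-bilinear multiplications S'' isotopic to S^{dtd}. -/
/-- The set of `r` such that some multiplication isotopic to `S` over `F` has the form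
`(x,y) ↦ ∑_{i=1}^r gᵢ(fᵢ(x)·y)` with `F`-linear `fᵢ, gᵢ`; the BEL-rank `brk(S)` is its
infimum. -/
def brkSet (F K : Type) [Field F] [Field K] [Algebra F K]
    (S : K → K → K) : Set ℕ :=
  {r | ∃ (S' : K → K → K) (f g : Fin r → (K →ₗ[F] K)),
    Isotopic F K S S' ∧ ∀ x y : K, S' x y = ∑ i : Fin r, g i (f i x * y)}

open Module Algebra

theorem Nat.sInf_eq_of_forall_exists_le {A B : Set ℕ} (hB : B.Nonempty) (hBA : B ⊆ A)
    (hAB : ∀ a ∈ A, ∃ b ∈ B, b ≤ a) : sInf A = sInf B :=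
  le_antisymm (Nat.sInf_le (hBA (Nat.sInf_mem hB))) <| le_csInf (hB.mono hBA) fun a ha =>
    let ⟨_, hb, hba⟩ := hAB a ha
    (Nat.sInf_le hb).trans hba

theorem Matrix.exists_eq_mul_of_rank_s10 {m n K : Type*} [Fintype m] [Fintype n] [Field K]
    (M : Matrix m n K) :
    ∃ (A : Matrix m (Fin M.rank) K) (B : Matrix (Fin M.rank) n K), M = A * B := by
  let V := Submodule.span K (Set.range M.col)
  let b : Basis (Fin M.rank) K V :=
    (finBasis K V).reindex (finCongr M.rank_eq_finrank_span_cols.symm)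
  have hcol (j : n) : M.col j ∈ V := Submodule.subset_span ⟨j, rfl⟩
  refine ⟨.of fun i u => (b u : m → K) i, .of fun u j => b.repr ⟨_, hcol j⟩ u, ?_⟩
  ext i j
  have := congr_arg (fun v : V => (v : m → K) i) (b.sum_repr ⟨_, hcol j⟩)
  simp only [Submodule.coe_sum, SetLike.val_smul, Finset.sum_apply, Pi.smul_apply,
    smul_eq_mul] at this
  simpa [Matrix.mul_apply, mul_comm] using this.symm

theorem Matrix.sum_mul_sum_eq_sum_sum_mul_apply {m ι n K : Type*} [Fintype m] [Fintype ι]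
    [Fintype n] [CommRing K] (A : Matrix m ι K) (B : Matrix ι n K) (X : m → K) (Y : n → K) :
    ∑ u, (∑ i, A i u * X i) * (∑ j, B u j * Y j) = ∑ i, ∑ j, (A * B) i j * X i * Y j := by
  simp_rw [Finset.sum_mul_sum, Matrix.mul_apply, Finset.sum_mul]
  refine Finset.sum_comm.trans (Finset.sum_congr rfl fun i _ => Finset.sum_comm.trans
    (Finset.sum_congr rfl fun j _ => Finset.sum_congr rfl fun u _ => by ring))

section Frobenius

variable {F K : Type} [Field F] [Fintype F] [Field K] [Finite K] [Algebra F K]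

variable (F K) in
noncomputable def frobeniusPowBasis : Basis (Fin (finrank F K)) K (Module.End F K) :=
  basisOfLinearIndependentOfCardEqFinrank'
    (fun i => (FiniteField.frobeniusAlgHom F K ^ (i : ℕ)).toLinearMap)
    ((linearIndependent_toLinearMap F K K).comp _
      (FiniteField.bijective_frobeniusAlgHom_pow F K).injective)
    (by simp [finrank_linearMap_self])

theorem frobeniusPowBasis_equivFun_symm_apply (a : Fin (finrank F K) → K) (x : K) :
    (frobeniusPowBasis F K).equivFun.symm a x = ∑ i, a i * x ^ Fintype.card F ^ (i : ℕ) := by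
  simp [frobeniusPowBasis, Basis.equivFun_symm_apply, AlgHom.coe_pow,
    FiniteField.coe_frobeniusAlgHom, pow_iterate]

theorem exists_isMatrixOf_rank_le {ι : Type*} [Fintype ι] (f h : ι → Module.End F K)
    {T : K → K → K} (hT : ∀ x y, T x y = ∑ u, f u x * h u y) :
    ∃ M, IsMatrixOf (Fintype.card F) (finrank F K) K T M ∧ M.rank ≤ Fintype.card ι := by
  let e := (frobeniusPowBasis F K).equivFun
  refine ⟨Matrix.of (fun i u => e (f u) i) * Matrix.of (fun u j => e (h u) j), fun x y => ?_,
    (Matrix.rank_mul_le_right _ _).trans (Matrix.rank_le_card_height _)⟩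
  rw [hT, ← Matrix.sum_mul_sum_eq_sum_sum_mul_apply]
  refine Finset.sum_congr rfl fun u _ => ?_
  simp only [Matrix.of_apply, ← frobeniusPowBasis_equivFun_symm_apply, e,
    LinearEquiv.symm_apply_apply]

theorem exists_eq_sum_mul_of_isMatrixOf {T : K → K → K}
    {M : Matrix (Fin (finrank F K)) (Fin (finrank F K)) K}
    (hM : IsMatrixOf (Fintype.card F) (finrank F K) K T M) :
    ∃ f h : Fin M.rank → Module.End F K, ∀ x y, T x y = ∑ u, f u x * h u y := by
  obtain ⟨A, B, hAB⟩ := M.exists_eq_mul_of_rank_s10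
  let e := (frobeniusPowBasis F K).equivFun
  refine ⟨fun u => e.symm (fun i => A i u), fun u => e.symm (B u), fun x y => ?_⟩
  simp only [hM x y, hAB, e, frobeniusPowBasis_equivFun_symm_apply,
    Matrix.sum_mul_sum_eq_sum_sum_mul_apply]

theorem exists_isMatrixOf (T : K →ₗ[F] K →ₗ[F] K) :
    ∃ M, IsMatrixOf (Fintype.card F) (finrank F K) K (fun x y => T x y) M := by
  let b := frobeniusPowBasis F K
  obtain ⟨M, hM, -⟩ := exists_isMatrixOf_rank_le (T := fun x y => T x y)
    (fun j => (b.coord j).restrictScalars F ∘ₗ T) b fun x y => by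
      conv_lhs => rw [← b.sum_repr (T x)]
      simp only [LinearMap.sum_apply, LinearMap.smul_apply, smul_eq_mul, LinearMap.coe_comp,
        Function.comp_apply, LinearMap.restrictScalars_apply, Basis.coord_apply]
  exact ⟨M, hM⟩

end Frobenius

section TraceAdjoint

variable {F K : Type} [Field F] [Field K] [Algebra F K] [FiniteDimensional F K]
  [Algebra.IsSeparable F K]

variable (F K) in
noncomputable def traceAdjoint : Module.End F K →ₗ[F] Module.End F K :=
  ((traceForm F K).toDual (traceForm_nondegenerate F K)).symm.conj.toLinearMap ∘ₗ
    Module.Dual.transpose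

theorem trace_traceAdjoint_mul (g : Module.End F K) (x y : K) :
    trace F K (traceAdjoint F K g x * y) = trace F K (x * g y) := by
  set φ := (traceForm F K).toDual (traceForm_nondegenerate F K)
  have : φ (traceAdjoint F K g x) = φ x ∘ₗ g := by
    simp [traceAdjoint, φ, LinearEquiv.conj_apply, Module.Dual.transpose_apply]
  simpa [φ, LinearMap.BilinForm.toDual_def] using LinearMap.congr_fun this y

theorem trace_mul_traceAdjoint (g : Module.End F K) (x y : K) :
    trace F K (x * traceAdjoint F K g y) = trace F K (g x * y) := by
  rw [mul_comm, trace_traceAdjoint_mul, mul_comm]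

variable (F) in
theorem eq_of_forall_trace_mul_eq {w w' : K} (h : ∀ z, trace F K (z * w) = trace F K (z * w')) :
    w = w' := by
  refine ((traceForm F K).toDual (traceForm_nondegenerate F K)).injective <|
    LinearMap.ext fun z => ?_
  simpa [LinearMap.BilinForm.toDual_def, mul_comm] using h z

theorem traceAdjoint_traceAdjoint (g : Module.End F K) :
    traceAdjoint F K (traceAdjoint F K g) = g := by
  ext x
  refine eq_of_forall_trace_mul_eq F fun z => ?_
  rw [trace_mul_traceAdjoint, trace_traceAdjoint_mul]

theorem traceAdjoint_comp (g h : Module.End F K) :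
    traceAdjoint F K (g ∘ₗ h) = traceAdjoint F K h ∘ₗ traceAdjoint F K g := by
  ext x
  refine eq_of_forall_trace_mul_eq F fun z => ?_
  rw [LinearMap.comp_apply, trace_mul_traceAdjoint, trace_mul_traceAdjoint, trace_mul_traceAdjoint,
    LinearMap.comp_apply]

theorem traceAdjoint_id : traceAdjoint F K (LinearMap.id : Module.End F K) = LinearMap.id := by
  ext x
  refine eq_of_forall_trace_mul_eq F fun z => ?_
  rw [trace_mul_traceAdjoint, LinearMap.id_apply, LinearMap.id_apply]

noncomputable def traceAdjointEquiv (e : K ≃ₗ[F] K) : K ≃ₗ[F] K :=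
  .ofLinearMap (traceAdjoint F K e) (traceAdjoint F K e.symm)
    (by rw [← traceAdjoint_comp, LinearEquiv.symm_comp, traceAdjoint_id])
    (by rw [← traceAdjoint_comp, LinearEquiv.comp_symm, traceAdjoint_id])

theorem traceAdjointEquiv_apply (e : K ≃ₗ[F] K) (x : K) :
    traceAdjointEquiv e x = traceAdjoint F K e x :=
  rfl

/-- The paper's `T^{dtd} = ((Tᵈ)ᵗ)ᵈ`, which unwinds to `x ↦ (T x)^`. -/
noncomputable def dtd (T : K →ₗ[F] K →ₗ[F] K) : K →ₗ[F] K →ₗ[F] K :=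
  traceAdjoint F K ∘ₗ T

theorem trace_mul_dtd (T : K →ₗ[F] K →ₗ[F] K) (x y z : K) :
    trace F K (z * dtd T x y) = trace F K (T x z * y) :=
  trace_mul_traceAdjoint (T x) z y

theorem eq_dtd_of_trace_mul_eq {T T' : K →ₗ[F] K →ₗ[F] K}
    (h : ∀ x y z, trace F K (T x z * y) = trace F K (z * T' x y)) : T' = dtd T := by
  ext x y
  exact eq_of_forall_trace_mul_eq F fun z => by rw [trace_mul_dtd, h]

theorem dtd_dtd (T : K →ₗ[F] K →ₗ[F] K) : dtd (dtd T) = T := by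
  ext x y
  exact congr($(traceAdjoint_traceAdjoint (T x)) y)

theorem isotopic_dtd {T₁ T₂ : K →ₗ[F] K →ₗ[F] K}
    (h : Isotopic F K (fun x y => T₁ x y) (fun x y => T₂ x y)) :
    Isotopic F K (fun x y => dtd T₁ x y) (fun x y => dtd T₂ x y) := by
  obtain ⟨Fm, Gm, Hm, hT⟩ := h
  refine ⟨Fm, traceAdjointEquiv Hm.symm, traceAdjointEquiv Gm.symm, fun x y => ?_⟩
  refine eq_of_forall_trace_mul_eq F fun z => ?_
  have hz : T₂ (Fm x) z = Hm (T₁ x (Gm.symm z)) := by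
    rw [← hT, Gm.apply_symm_apply]
  simp only [traceAdjointEquiv_apply, trace_mul_dtd, trace_mul_traceAdjoint]
  rw [hz, LinearEquiv.coe_coe, Hm.symm_apply_apply, LinearEquiv.coe_coe]

theorem dtd_apply_eq_sum_mul {ι : Type*} [Fintype ι] {T : K →ₗ[F] K →ₗ[F] K}
    {f g : ι → Module.End F K} (hT : ∀ x y, T x y = ∑ u, g u (f u x * y)) (x y : K) :
    dtd T x y = ∑ u, f u x * traceAdjoint F K (g u) y := by
  refine eq_of_forall_trace_mul_eq F fun z => ?_
  simp only [trace_mul_dtd, hT, Finset.sum_mul, Finset.mul_sum, map_sum]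
  exact Finset.sum_congr rfl fun u _ => by rw [← trace_mul_traceAdjoint, mul_assoc, mul_left_comm]

theorem dtd_apply_eq_sum_traceAdjoint_mul {ι : Type*} [Fintype ι] {T : K →ₗ[F] K →ₗ[F] K}
    {f h : ι → Module.End F K} (hT : ∀ x y, T x y = ∑ u, f u x * h u y) (x y : K) :
    dtd T x y = ∑ u, traceAdjoint F K (h u) (f u x * y) := by
  refine eq_of_forall_trace_mul_eq F fun z => ?_
  simp only [trace_mul_dtd, hT, Finset.sum_mul, Finset.mul_sum, map_sum, trace_mul_traceAdjoint]
  exact Finset.sum_congr rfl fun u _ => by rw [mul_comm (f u x), mul_assoc]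

end TraceAdjoint

section Rank

variable {F K : Type} [Field F] [Fintype F] [Field K] [Finite K] [Algebra F K]

theorem exists_mem_mrkSet_dtd_le_of_mem_brkSet (S : K →ₗ[F] K →ₗ[F] K) {r : ℕ}
    (hr : r ∈ brkSet F K (fun x y => S x y)) :
    ∃ m ∈ mrkSet (Fintype.card F) (finrank F K) F K (fun x y => dtd S x y), m ≤ r := by
  obtain ⟨S', f, g, hiso, hS'⟩ := hr
  let T : K →ₗ[F] K →ₗ[F] K := ∑ u, (LinearMap.mul F K ∘ₗ f u).compr₂ (g u)
  have hT (x y : K) : T x y = ∑ u, g u (f u x * y) := by simp [T]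
  have hisoT : Isotopic F K (fun x y => S x y) (fun x y => T x y) := by
    simpa only [hT, ← hS'] using hiso
  obtain ⟨M, hM, hrank⟩ := exists_isMatrixOf_rank_le _ _ (dtd_apply_eq_sum_mul hT)
  exact ⟨M.rank, ⟨dtd T, M, isotopic_dtd hisoT, hM, rfl⟩, by simpa using hrank⟩

theorem mrkSet_dtd_subset_brkSet (S : K →ₗ[F] K →ₗ[F] K) :
    mrkSet (Fintype.card F) (finrank F K) F K (fun x y => dtd S x y) ⊆
      brkSet F K (fun x y => S x y) := by
  rintro _ ⟨S'', M, hiso, hM, rfl⟩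
  obtain ⟨f, h, hS''⟩ := exists_eq_sum_mul_of_isMatrixOf hM
  refine ⟨fun x y => dtd S'' x y, f, fun u => traceAdjoint F K (h u), ?_,
    dtd_apply_eq_sum_traceAdjoint_mul hS''⟩
  simpa only [dtd_dtd] using isotopic_dtd hiso

theorem mrkSet_nonempty (T : K →ₗ[F] K →ₗ[F] K) :
    (mrkSet (Fintype.card F) (finrank F K) F K (fun x y => T x y)).Nonempty := by
  obtain ⟨M, hM⟩ := exists_isMatrixOf T
  exact ⟨M.rank, T, M, ⟨.refl F K, .refl F K, .refl F K, fun _ _ => rfl⟩, hM, rfl⟩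

end Rank

theorem stmt10_general (q n : ℕ)
    (F K : Type) [Field F] [Field K] [Algebra F K] [Fintype F] [Fintype K]
    (hcF : Fintype.card F = q) (hcK : Fintype.card K = q ^ n)
    (S : K →ₗ[F] K →ₗ[F] K)
    (Sdtd : K →ₗ[F] K →ₗ[F] K)
    (hdtd : ∀ x y z : K,
      Algebra.trace F K (S x z * y) = Algebra.trace F K (z * Sdtd x y)) :
    sInf (brkSet F K (fun x y => S x y)) =
      sInf (mrkSet q n F K (fun x y => Sdtd x y)) := by
  have hn : n = finrank F K := Nat.pow_right_injective (hcF ▸ Fintype.one_lt_card)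
    (hcK.symm.trans (hcF ▸ card_eq_pow_finrank))
  subst hcF hn
  obtain rfl := eq_dtd_of_trace_mul_eq hdtd
  exact Nat.sInf_eq_of_forall_exists_le (mrkSet_nonempty (dtd S)) (mrkSet_dtd_subset_brkSet S)
    fun _ => exists_mem_mrkSet_dtd_le_of_mem_brkSet S

/-- `brk(S) = mrk([S^{dtd}])`, where `S^{dtd}` is characterized by
`Tr(S(x,z)·y) = Tr(z·S^{dtd}(x,y))` for all `x, y, z`. -/
theorem stmt10 (q n : ℕ) (hq : IsPrimePow q) (hn : 1 ≤ n)
    (F K : Type) [Field F] [Field K] [Algebra F K] [Fintype F] [Fintype K]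
    (hcF : Fintype.card F = q) (hcK : Fintype.card K = q ^ n)
    (S : K →ₗ[F] K →ₗ[F] K)
    (hpre : ∀ x y : K, S x y = 0 → x = 0 ∨ y = 0)
    (Sdtd : K →ₗ[F] K →ₗ[F] K)
    (hdtd : ∀ x y z : K,
      Algebra.trace F K (S x z * y) = Algebra.trace F K (z * Sdtd x y)) :
    sInf (brkSet F K (fun x y => S x y)) =
      sInf (mrkSet q n F K (fun x y => Sdtd x y)) :=
  stmt10_general q n F K hcF hcK S Sdtd hdtd
end

section
/- Let q' be a prime power, t ≥ 1, q = q'^t, n ≥ 1, and let S be a presemifield multiplication on F_{q^n} over F_q (so S is in particular F_{q'}-bilinear on F_{q^n} = F_{q'^{nt}}). Then the minimum r such that some multiplication isotopic to S via bijective F_q-linear maps has the form (x,y) ↦ Σ_{i=1}^{r} g_i(f_i(x)·y) with F_q-linear f_i, g_i equals the minimum r such that some multiplication isotopic to S via bijective F_{q'}-linear maps has the form (x,y) ↦ Σ_{i=1}^{r} g_i(f_i(x)·y) with F_{q'}-linear f_i, g_i. In other words, the BEL-rank of S computed over F_q equals the BEL-rank of S computed over F_{q'}. -/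
/-!
Over a base field `R`, having BEL-rank at most `r` means that for some `R`-linear bijection `B`
the maps `y ↦ S x (B y)` span a space of dimension at most `r` over `K`, where `K` acts on
`End_R K` by precomposition with multiplication. An `F`-linear `B` is `F'`-linear, so the rank
over `F'` is at most the rank over `F`. Conversely, averaging over `Fˣ` splits every `F'`-linear
map into `τ`-semilinear parts, `τ ∈ Gal(F/F')`; for an `F'`-linear `B` the span `M` is stable under
these projections, and composing each `τ`-part with the inverse of an extension of `τ` to `K`
makes it `F`-linear without enlarging the space it fills. A `K`-combination of these `F`-linear
parts of `B`, with coefficients found by counting, is an `F`-linear bijection `B₂` whose span is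
no larger than `M`.
-/

open Module

/-- `K →ₗ[R] K` as a `K`-vector space in which `c` acts by precomposition with `(c * ·)`, so
that `(x, y) ↦ ∑ᵢ gᵢ (fᵢ x * y)` says that every `y ↦ S x y` lies in the span of the `gᵢ`. -/
def PrecompEnd (R K : Type*) [Field R] [Field K] [Algebra R K] := K →ₗ[R] K

namespace PrecompEnd

variable {R K : Type*} [Field R] [Field K] [Algebra R K]

instance : AddCommGroup (PrecompEnd R K) := inferInstanceAs (AddCommGroup (K →ₗ[R] K))

instance : FunLike (PrecompEnd R K) K K := inferInstanceAs (FunLike (K →ₗ[R] K) K K)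

instance : LinearMapClass (PrecompEnd R K) R K K :=
  inferInstanceAs (LinearMapClass (K →ₗ[R] K) R K K)

noncomputable instance : Module K (PrecompEnd R K) :=
  Module.compHom (R := Kᵈᵐᵃ) (K →ₗ[R] K) ((RingEquiv.toOpposite K).toRingHom : K →+* Kᵈᵐᵃ)

instance [Finite K] : Finite (PrecompEnd R K) :=
  Finite.of_injective _ (DFunLike.coe_injective (F := PrecompEnd R K))

def of : (K →ₗ[R] K) ≃+ PrecompEnd R K := AddEquiv.refl _

@[ext] theorem ext {T T' : PrecompEnd R K} (h : ∀ y, T y = T' y) : T = T' := LinearMap.ext h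

@[simp] theorem of_apply (T : K →ₗ[R] K) (y : K) : of T y = T y := rfl

@[simp] theorem of_symm_apply (T : PrecompEnd R K) (y : K) : of.symm T y = T y := rfl

@[simp] theorem smul_apply (c : K) (T : PrecompEnd R K) (y : K) : (c • T) y = T (c * y) := rfl

@[simp] theorem add_apply (T T' : PrecompEnd R K) (y : K) : (T + T') y = T y + T' y := rfl

@[simp] theorem zero_apply (y : K) : (0 : PrecompEnd R K) y = 0 := rfl

@[simp] theorem neg_apply (T : PrecompEnd R K) (y : K) : (-T) y = -T y := rfl

@[simp] theorem sum_apply {ι : Type*} (s : Finset ι) (T : ι → PrecompEnd R K) (y : K) :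
    (∑ i ∈ s, T i) y = ∑ i ∈ s, T i y :=
  LinearMap.sum_apply s T y

end PrecompEnd

theorem finrank_le_finrank_of_natCard_le {K V W : Type*} [Field K] [Finite K] [AddCommGroup V]
    [Module K V] [Module.Finite K V] [AddCommGroup W] [Module K W] [Module.Finite K W]
    (h : Nat.card V ≤ Nat.card W) : finrank K V ≤ finrank K W := by
  rwa [natCard_eq_pow_finrank (K := K) (V := V), natCard_eq_pow_finrank (K := K) (V := W),
    Nat.pow_le_pow_iff_right Finite.one_lt_card] at h

theorem exists_forall_ne_zero_sum_ne_zero {K ι : Type*} [Field K] [Finite K] [Fintype ι]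
    (C : ι → K →+ K) (hC : Function.Surjective fun z : ι → K => ∑ i, C i (z i)) :
    ∃ c : ι → K, ∀ x ≠ 0, ∑ i, C i (c i * x) ≠ 0 := by
  classical
  have := Fintype.ofFinite K
  let ψ : K → (ι → K) →+ K := fun x =>
    ∑ i, (C i).comp ((AddMonoidHom.mulRight x).comp (Pi.evalAddMonoidHom (fun _ => K) i))
  have hψ : ∀ x c, ψ x c = ∑ i, C i (c i * x) := by simp [ψ]
  have hker : ∀ x ≠ (0 : K),
      ((ψ x).ker : Set (ι → K)).toFinset.card * Nat.card K = Nat.card (ι → K) := by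
    intro x hx
    have hsurj : Function.Surjective (ψ x) := fun y => by
      obtain ⟨z, rfl⟩ := hC y
      exact ⟨fun i => z i * x⁻¹, by simp [hψ, hx]⟩
    rw [Set.toFinset_card, ← Nat.card_eq_fintype_card, ← (ψ x).ker.card_mul_index,
      AddSubgroup.index_ker, AddMonoidHom.range_eq_top.2 hsurj]
    simp
  -- union bound: the `#K - 1` kernels `ker (ψ x)`, `x ≠ 0`, each of index `#K`, cannot cover
  by_contra! h
  have hcover : (Finset.univ : Finset (ι → K)) ⊆
      (Finset.univ.filter (· ≠ 0)).biUnion fun x => ((ψ x).ker : Set (ι → K)).toFinset := by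
    intro c _
    obtain ⟨x, hx, hc⟩ := h c
    simpa [hψ] using ⟨x, hx, hc⟩
  have hle := (Finset.card_le_card hcover).trans Finset.card_biUnion_le
  have hsum : ∑ x ∈ Finset.univ.filter (· ≠ (0 : K)),
      ((ψ x).ker : Set (ι → K)).toFinset.card * Nat.card K =
        (Nat.card K - 1) * Nat.card (ι → K) := by
    rw [Finset.sum_congr rfl fun x hx => hker x (Finset.mem_filter.1 hx).2, Finset.sum_const,
      smul_eq_mul, Finset.filter_ne', Finset.card_erase_of_mem (Finset.mem_univ _),
      Finset.card_univ, ← Nat.card_eq_fintype_card]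
  have hmul := Nat.mul_le_mul_right (Nat.card K) hle
  rw [Finset.sum_mul, hsum, Finset.card_univ, ← Nat.card_eq_fintype_card] at hmul
  have hlt : (Nat.card K - 1) * Nat.card (ι → K) < Nat.card (ι → K) * Nat.card K := by
    rw [mul_comm]
    exact Nat.mul_lt_mul_of_pos_left (Nat.sub_lt Nat.card_pos one_pos) Nat.card_pos
  exact hmul.not_gt hlt

theorem span_algEquiv_toLinearMap_eq_top (F' K : Type*) [Field F'] [Field K] [Algebra F' K]
    [FiniteDimensional F' K] [IsGalois F' K] :
    Submodule.span K (Set.range (AlgEquiv.toLinearMap : (K ≃ₐ[F'] K) → K →ₗ[F'] K)) = ⊤ :=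
  ((linearIndependent_toLinearMap F' K K).comp _
    AlgEquiv.coe_toAlgHom_injective).span_eq_top_of_card_eq_finrank' (by
      rw [Fintype.card_eq_nat_card, IsGalois.card_aut_eq_finrank, finrank_linearMap_self])

noncomputable def spanComp {R K : Type*} [Field R] [Field K] [Algebra R K]
    (S : K →ₗ[R] K →ₗ[R] K) (B : K →ₗ[R] K) : Submodule K (PrecompEnd R K) :=
  Submodule.span K (Set.range fun x => .of (S x ∘ₗ B))

section Semilinear

variable {F' F K : Type*} [Field F'] [Field F] [Field K] [Algebra F' F] [Algebra F K]

def IsSemilinear (τ : F ≃ₐ[F'] F) (T : K → K) : Prop :=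
  ∀ (a : F) (y : K), T (a • y) = τ a • T y

theorem IsSemilinear.comp {τ τ' : F ≃ₐ[F'] F} {T T' : K → K} (hT : IsSemilinear τ T)
    (hT' : IsSemilinear τ' T') : IsSemilinear (τ * τ') (T ∘ T') := fun a y => by
  rw [Function.comp_apply, hT' a y, hT, Function.comp_apply, AlgEquiv.mul_apply]

theorem IsSemilinear.symm {τ : F ≃ₐ[F'] F} {e : K ≃ K} (h : IsSemilinear τ e) :
    IsSemilinear τ⁻¹ e.symm := fun a y => by
  rw [e.symm_apply_eq, h, e.apply_symm_apply]
  simp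

variable [Algebra F' K] [IsScalarTower F' F K]

theorem isSemilinear_liftNormal [Normal F' K] (τ : F ≃ₐ[F'] F) :
    IsSemilinear τ (τ.liftNormal K) := fun a y => by
  simp [Algebra.smul_def]

theorem AlgEquiv.isSemilinear_restrictNormal [Normal F' F] (g : K ≃ₐ[F'] K) :
    IsSemilinear (g.restrictNormal F) g := fun a y => by
  simp [Algebra.smul_def]

variable [Fintype F] [DecidableEq F]

/-- Projection onto the `τ`-semilinear maps; the sign compensates for `#Fˣ = -1` in `F`. -/
noncomputable def semilinearPart (τ : F ≃ₐ[F'] F) : PrecompEnd F' K →ₗ[K] PrecompEnd F' K where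
  toFun T := PrecompEnd.of
    { toFun := fun y => -∑ a : Fˣ, (τ a)⁻¹ • T ((a : F) • y)
      map_add' := fun y z => by
        simp only [smul_add, map_add, Finset.sum_add_distrib, neg_add]
      map_smul' := fun c y => by
        simp only [smul_comm _ c, map_smul, Finset.smul_sum, smul_neg,
          RingHom.id_apply] }
  map_add' T T' := by
    ext y
    simp only [PrecompEnd.of_apply, PrecompEnd.add_apply, LinearMap.coe_mk, AddHom.coe_mk,
      smul_add, Finset.sum_add_distrib, neg_add]
  map_smul' c T := by
    ext y
    simp only [PrecompEnd.of_apply, PrecompEnd.smul_apply, LinearMap.coe_mk, AddHom.coe_mk,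
      RingHom.id_apply, mul_smul_comm]

theorem semilinearPart_apply (τ : F ≃ₐ[F'] F) (T : PrecompEnd F' K) (y : K) :
    semilinearPart τ T y = -∑ a : Fˣ, (τ a)⁻¹ • T ((a : F) • y) :=
  rfl

theorem sum_units_inv_mul_eq (τ τ' : F ≃ₐ[F'] F) :
    ∑ a : Fˣ, (τ a)⁻¹ * τ' a = if τ = τ' then -1 else 0 := by
  split_ifs with h
  · subst h
    have hcard : ((Fintype.card F : ℕ) : F) = 0 := FiniteField.cast_card_eq_zero F
    simp [Fintype.card_units, Nat.cast_sub Fintype.card_pos, hcard]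
  · let χ : Fˣ →* F :=
      { toFun := fun a => (τ a)⁻¹ * τ' a
        map_one' := by simp
        map_mul' := fun a b => by simp only [Units.val_mul, map_mul, mul_inv]; ring }
    refine sum_hom_units_eq_zero χ fun hχ => h (AlgEquiv.ext fun a => ?_)
    rcases eq_or_ne a 0 with rfl | ha
    · simp
    have := DFunLike.congr_fun hχ (Units.mk0 a ha)
    simp only [MonoidHom.coe_mk, OneHom.coe_mk, Units.val_mk0, MonoidHom.one_apply, χ] at this
    rwa [inv_mul_eq_one₀ (by simpa using ha)] at this

theorem semilinearPart_of_isSemilinear {τ τ' : F ≃ₐ[F'] F} {T : PrecompEnd F' K}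
    (hT : IsSemilinear τ' T) : semilinearPart τ T = if τ = τ' then T else 0 := by
  ext y
  have key : semilinearPart τ T y = -((∑ a : Fˣ, (τ a)⁻¹ * τ' a) • T y) := by
    rw [semilinearPart_apply, Finset.sum_smul]
    simp only [hT _ y, smul_smul]
  rw [key, sum_units_inv_mul_eq]
  split_ifs <;> simp

theorem isSemilinear_semilinearPart (τ : F ≃ₐ[F'] F) (T : PrecompEnd F' K) :
    IsSemilinear τ (semilinearPart τ T) := fun b y => by
  rcases eq_or_ne b 0 with rfl | hb
  · simp
  simp only [semilinearPart_apply, smul_neg, Finset.smul_sum]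
  congr 1
  refine Fintype.sum_equiv (Equiv.mulRight (Units.mk0 b hb)) _ _ fun a => ?_
  have hτb : τ b ≠ 0 := by simpa using hb
  rw [Equiv.coe_mulRight, Units.val_mul, Units.val_mk0, map_mul, mul_inv, smul_smul (τ b),
    mul_left_comm, mul_inv_cancel₀ hτb, mul_one, mul_smul]

theorem semilinearPart_comp (τ : F ≃ₐ[F'] F) (L : K →ₗ[F] K) (T : PrecompEnd F' K) :
    semilinearPart τ (.of (L.restrictScalars F' ∘ₗ PrecompEnd.of.symm T)) =
      .of (L.restrictScalars F' ∘ₗ PrecompEnd.of.symm (semilinearPart τ T)) := by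
  ext y
  simp [semilinearPart_apply, map_sum]

theorem map_semilinearPart_spanComp_le (τ : F ≃ₐ[F'] F) (S : K →ₗ[F] K →ₗ[F] K)
    (B : K →ₗ[F'] K) :
    (spanComp (S.restrictScalars₁₂ F' F') B).map (semilinearPart τ) ≤
      spanComp (S.restrictScalars₁₂ F' F') B := by
  rw [spanComp, Submodule.map_span_le]
  rintro _ ⟨x, rfl⟩
  have h : semilinearPart τ (.of (S.restrictScalars₁₂ F' F' x ∘ₗ B)) =
      -∑ a : Fˣ, algebraMap F K a • .of (S.restrictScalars₁₂ F' F' ((τ a)⁻¹ • x) ∘ₗ B) := by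
    ext y
    simp [semilinearPart_apply, ← Algebra.smul_def]
  rw [h]
  exact neg_mem (sum_mem fun a _ => Submodule.smul_mem _ _ (Submodule.subset_span ⟨_, rfl⟩))

variable [Finite K]

theorem sum_semilinearPart (T : PrecompEnd F' K) : ∑ τ : F ≃ₐ[F'] F, semilinearPart τ T = T := by
  obtain ⟨T, rfl⟩ := PrecompEnd.of.surjective T
  have hT := span_algEquiv_toLinearMap_eq_top F' K ▸ Submodule.mem_top (x := T)
  induction hT using Submodule.span_induction with
  | mem _ hg =>
    obtain ⟨g, rfl⟩ := hg
    simp_rw [semilinearPart_of_isSemilinear (T := .of g.toLinearMap)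
      g.isSemilinear_restrictNormal, Finset.sum_ite_eq', Finset.mem_univ, if_true]
  | zero => simp
  | add T T' _ _ h h' => simp only [map_add, Finset.sum_add_distrib, h, h']
  | smul c T _ h =>
    -- here `c • T` is postcomposition with `(c * ·)`, an `F`-linear map
    have hc : c • T = (LinearMap.mulLeft F c).restrictScalars F' ∘ₗ PrecompEnd.of.symm (.of T) :=
      rfl
    rw [hc]
    simp_rw [semilinearPart_comp]
    ext y
    rw [PrecompEnd.sum_apply]
    simp only [PrecompEnd.of_apply, LinearMap.comp_apply, PrecompEnd.of_symm_apply,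
      LinearMap.restrictScalars_apply, LinearMap.mulLeft_apply]
    rw [← Finset.mul_sum, ← PrecompEnd.sum_apply, h, PrecompEnd.of_apply]

/-- The `τ`-semilinear part of `T`, made `F`-linear by composing with the inverse of an
extension of `τ` to `K`. -/
noncomputable def twistedPart (τ : F ≃ₐ[F'] F) :
    PrecompEnd F' K →ₛₗ[(τ.liftNormal K : K →+* K)] PrecompEnd F K where
  toFun T := .of
    { toFun := fun y => semilinearPart τ T ((τ.liftNormal K).symm y)
      map_add' := by simp
      map_smul' := fun a y => by
        have := ((isSemilinear_semilinearPart τ T).comp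
          (isSemilinear_liftNormal τ (K := K)).symm) a y
        simpa using this }
  map_add' T T' := by ext; simp
  map_smul' c T := by ext y; simp

theorem twistedPart_apply (τ : F ≃ₐ[F'] F) (T : PrecompEnd F' K) (y : K) :
    twistedPart τ T y = semilinearPart τ T ((τ.liftNormal K).symm y) :=
  rfl

theorem twistedPart_semilinearPart (τ τ' : F ≃ₐ[F'] F) (T : PrecompEnd F' K) :
    twistedPart τ (semilinearPart τ' T) = if τ = τ' then twistedPart τ T else 0 := by
  have h := semilinearPart_of_isSemilinear (τ := τ) (isSemilinear_semilinearPart τ' T)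
  split_ifs with hτ
  · subst hτ
    ext y
    simp only [twistedPart_apply, h, if_true]
  · ext y
    simp [twistedPart_apply, h, hτ]

variable (F) in
noncomputable def twistedSpan (M : Submodule K (PrecompEnd F' K)) :
    Submodule K (PrecompEnd F K) where
  carrier := {U | ∃ T : (F ≃ₐ[F'] F) → PrecompEnd F' K, (∀ τ, T τ ∈ M) ∧
    ∑ τ, twistedPart τ (T τ) = U}
  add_mem' := by
    rintro _ _ ⟨T, hT, rfl⟩ ⟨T', hT', rfl⟩
    exact ⟨T + T', fun τ => M.add_mem (hT τ) (hT' τ),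
      by simp only [Pi.add_apply, map_add, Finset.sum_add_distrib]⟩
  zero_mem' := ⟨0, fun _ => M.zero_mem, by simp⟩
  smul_mem' c := by
    rintro _ ⟨T, hT, rfl⟩
    refine ⟨fun τ => (τ.liftNormal K).symm c • T τ, fun τ => M.smul_mem _ (hT τ), ?_⟩
    simp [Finset.smul_sum, map_smulₛₗ]

theorem mem_twistedSpan {M : Submodule K (PrecompEnd F' K)} {U : PrecompEnd F K} :
    U ∈ twistedSpan F M ↔
      ∃ T : (F ≃ₐ[F'] F) → PrecompEnd F' K, (∀ τ, T τ ∈ M) ∧ ∑ τ, twistedPart τ (T τ) = U :=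
  Iff.rfl

theorem natCard_twistedSpan_le {M : Submodule K (PrecompEnd F' K)}
    (hM : ∀ τ : F ≃ₐ[F'] F, M.map (semilinearPart τ) ≤ M) :
    Nat.card (twistedSpan F M) ≤ Nat.card M := by
  let θ : M → twistedSpan F M := fun T =>
    ⟨∑ τ, twistedPart τ (T : PrecompEnd F' K),
      mem_twistedSpan.2 ⟨fun _ => T, fun _ => T.2, by rfl⟩⟩
  refine Nat.card_le_card_of_surjective θ ?_
  rintro ⟨U, hU⟩
  obtain ⟨T, hT, rfl⟩ := mem_twistedSpan.1 hU
  -- `twistedPart τ` only sees the `τ`-part, so the family `T` can be merged into one element of `M`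
  refine ⟨⟨∑ τ, semilinearPart τ (T τ), M.sum_mem fun τ _ => hM τ ⟨_, hT τ, rfl⟩⟩, ?_⟩
  ext1
  simp [θ, twistedPart_semilinearPart]

theorem surjective_sum_twistedPart (B : K ≃ₗ[F'] K) :
    Function.Surjective fun z : (F ≃ₐ[F'] F) → K => ∑ τ, twistedPart τ (.of B.toLinearMap) (z τ) :=
  fun y => by
    refine ⟨fun τ => τ.liftNormal K (B.symm y), ?_⟩
    simp only [twistedPart_apply, AlgEquiv.symm_apply_apply]
    rw [← PrecompEnd.sum_apply, sum_semilinearPart, PrecompEnd.of_apply,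
      LinearEquiv.coe_coe, LinearEquiv.apply_symm_apply]

theorem exists_linearEquiv_forall_mem_twistedSpan (S : K →ₗ[F] K →ₗ[F] K) (B : K ≃ₗ[F'] K) :
    ∃ B₂ : K ≃ₗ[F] K, ∀ x, PrecompEnd.of (S x ∘ₗ B₂.toLinearMap) ∈
      twistedSpan F (spanComp (S.restrictScalars₁₂ F' F') B.toLinearMap) := by
  let C : (F ≃ₐ[F'] F) → K →+ K := fun τ =>
    (PrecompEnd.of.symm (twistedPart τ (.of B.toLinearMap))).toAddMonoidHom
  obtain ⟨e, he⟩ := exists_forall_ne_zero_sum_ne_zero C (surjective_sum_twistedPart B)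
  let B₂ : K →ₗ[F] K := PrecompEnd.of.symm (∑ τ, e τ • twistedPart τ (.of B.toLinearMap))
  have hB₂ : Function.Injective B₂ := by
    refine (injective_iff_map_eq_zero B₂).2 fun x hx => ?_
    by_contra h0
    refine he x h0 ?_
    simpa [B₂, C] using hx
  refine ⟨LinearEquiv.ofInjectiveEndo B₂ hB₂, fun x => mem_twistedSpan.2
    ⟨fun τ => (τ.liftNormal K).symm (e τ) • .of ((S.restrictScalars₁₂ F' F') x ∘ₗ B.toLinearMap),
      fun τ => Submodule.smul_mem _ _ (Submodule.subset_span ⟨x, rfl⟩), ?_⟩⟩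
  have hcomp : ∀ τ, semilinearPart τ (.of ((S.restrictScalars₁₂ F' F') x ∘ₗ B.toLinearMap)) =
      .of ((S x).restrictScalars F' ∘ₗ PrecompEnd.of.symm (semilinearPart τ (.of B.toLinearMap))) :=
    fun τ => semilinearPart_comp τ (S x) (.of B.toLinearMap)
  ext y
  simp [map_smulₛₗ, twistedPart_apply, hcomp, B₂]

end Semilinear

section brkSet

variable {R K : Type} [Field R] [Field K] [Algebra R K]

theorem add_one_mem_brkSet {S : K → K → K} {r : ℕ} (h : r ∈ brkSet R K S) :
    r + 1 ∈ brkSet R K S := by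
  obtain ⟨S', f, g, hiso, hS'⟩ := h
  refine ⟨S', Fin.lastCases 0 f, Fin.lastCases 0 g, hiso, fun x y => ?_⟩
  simp [Fin.sum_univ_castSucc, hS']

theorem mem_brkSet_of_le {S : K → K → K} {r s : ℕ} (h : r ∈ brkSet R K S) (hrs : r ≤ s) :
    s ∈ brkSet R K S :=
  Nat.le_induction h (fun _ _ => add_one_mem_brkSet) s hrs

theorem exists_finrank_spanComp_le_of_mem_brkSet [Finite K] (S : K →ₗ[R] K →ₗ[R] K) {r : ℕ}
    (h : r ∈ brkSet R K (fun x y => S x y)) :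
    ∃ B : K ≃ₗ[R] K, finrank K (spanComp S B.toLinearMap) ≤ r := by
  obtain ⟨S', f, g, ⟨Fm, Gm, Hm, hiso⟩, hS'⟩ := h
  let G : Fin r → PrecompEnd R K := fun i => .of (Hm.symm.toLinearMap ∘ₗ g i)
  refine ⟨Gm.symm,
    (Submodule.finrank_mono ?_).trans ((finrank_range_le_card G).trans_eq (by simp))⟩
  rw [spanComp, Submodule.span_le, Set.range_subset_iff]
  intro x
  have hx : PrecompEnd.of (S x ∘ₗ Gm.symm.toLinearMap) = ∑ i, f i (Fm x) • G i := by
    ext y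
    have := hiso x (Gm.symm y)
    rw [LinearEquiv.apply_symm_apply, hS', ← Hm.symm_apply_eq] at this
    simp [G, ← this, map_sum]
  rw [SetLike.mem_coe, hx]
  exact Submodule.sum_mem _ fun i _ => Submodule.smul_mem _ _ (Submodule.subset_span ⟨i, rfl⟩)

theorem mem_brkSet_of_finrank_spanComp_le [Finite K] (S : K →ₗ[R] K →ₗ[R] K) (B : K ≃ₗ[R] K)
    {r : ℕ} (hr : finrank K (spanComp S B.toLinearMap) ≤ r) :
    r ∈ brkSet R K (fun x y => S x y) := by
  refine mem_brkSet_of_le ?_ hr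
  let b := Module.finBasis K (spanComp S B.toLinearMap)
  let v : K → spanComp S B.toLinearMap := fun x =>
    ⟨.of (S x ∘ₗ B.toLinearMap), Submodule.subset_span ⟨x, rfl⟩⟩
  have hv_smul : ∀ (a : R) x, v (a • x) = algebraMap R K a • v x := fun a x => by
    ext y
    simp [v, ← Algebra.smul_def]
  have hv_add : ∀ x x', v (x + x') = v x + v x' := fun x x' => by
    ext y
    simp [v]
  let f : Fin (finrank K (spanComp S B.toLinearMap)) → K →ₗ[R] K := fun k =>
    { toFun := fun x => b.repr (v x) k
      map_add' := fun x x' => by rw [hv_add, map_add, Finsupp.add_apply]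
      map_smul' := fun a x => by
        rw [hv_smul, map_smul, Finsupp.smul_apply, smul_eq_mul, RingHom.id_apply,
          Algebra.smul_def] }
  refine ⟨fun x y => S x (B y), f, fun k => PrecompEnd.of.symm (b k),
    ⟨.refl R K, B.symm, .refl R K, fun x y => by simp⟩, fun x y => ?_⟩
  have := congrArg (fun T : spanComp S B.toLinearMap => (T : PrecompEnd R K) y)
    (b.sum_repr (v x))
  simp only [Submodule.coe_sum, Submodule.coe_smul, PrecompEnd.sum_apply,
    PrecompEnd.smul_apply] at this
  exact this.symm

end brkSet

section tower

variable {F' F K : Type} [Field F'] [Field F] [Field K] [Algebra F' F] [Algebra F K]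
  [Algebra F' K] [IsScalarTower F' F K]

theorem brkSet_subset_brkSet_of_isScalarTower (S : K → K → K) :
    brkSet F K S ⊆ brkSet F' K S := by
  rintro r ⟨S', f, g, ⟨Fm, Gm, Hm, hiso⟩, hS'⟩
  exact ⟨S', fun i => (f i).restrictScalars F', fun i => (g i).restrictScalars F',
    ⟨Fm.restrictScalars F', Gm.restrictScalars F', Hm.restrictScalars F', hiso⟩, hS'⟩

theorem brkSet_subset_brkSet_of_linearMap [Finite K] [Fintype F] [DecidableEq F]
    (S : K →ₗ[F] K →ₗ[F] K) :
    brkSet F' K (fun x y => S x y) ⊆ brkSet F K (fun x y => S x y) := by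
  intro r hr
  obtain ⟨B, hB⟩ := exists_finrank_spanComp_le_of_mem_brkSet (S.restrictScalars₁₂ F' F') hr
  obtain ⟨B₂, hB₂⟩ := exists_linearEquiv_forall_mem_twistedSpan S B
  refine mem_brkSet_of_finrank_spanComp_le S B₂ (le_trans ?_ hB)
  calc finrank K (spanComp S B₂.toLinearMap)
      ≤ finrank K (twistedSpan F (spanComp (S.restrictScalars₁₂ F' F') B.toLinearMap)) :=
        Submodule.finrank_mono (Submodule.span_le.2 (Set.range_subset_iff.2 hB₂))
    _ ≤ _ := finrank_le_finrank_of_natCard_le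
        (natCard_twistedSpan_le fun τ => map_semilinearPart_spanComp_le τ S B.toLinearMap)

end tower

theorem stmt12_general
    (F' F K : Type) [Field F'] [Field F] [Field K]
    [Algebra F' F] [Algebra F K] [Algebra F' K] [IsScalarTower F' F K]
    [Fintype F] [Fintype K]
    (S : K →ₗ[F] K →ₗ[F] K) :
    sInf (brkSet F K (fun x y => S x y)) = sInf (brkSet F' K (fun x y => S x y)) := by
  classical
  rw [(brkSet_subset_brkSet_of_isScalarTower (F' := F') _).antisymm
    (brkSet_subset_brkSet_of_linearMap S)]

/-- the BEL-rank of a presemifield over `F_q` equals its BEL-rank computed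
over any subfield `F_{q'}` of `F_q`. -/
theorem stmt12 (q' t q n : ℕ) (hq' : IsPrimePow q') (ht : 1 ≤ t) (hqt : q = q' ^ t)
    (hn : 1 ≤ n)
    (F' F K : Type) [Field F'] [Field F] [Field K]
    [Algebra F' F] [Algebra F K] [Algebra F' K] [IsScalarTower F' F K]
    [Fintype F'] [Fintype F] [Fintype K]
    (hcF' : Fintype.card F' = q') (hcF : Fintype.card F = q)
    (hcK : Fintype.card K = q ^ n)
    (S : K →ₗ[F] K →ₗ[F] K)
    (hpre : ∀ x y : K, S x y = 0 → x = 0 ∨ y = 0) :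
    sInf (brkSet F K (fun x y => S x y)) = sInf (brkSet F' K (fun x y => S x y)) :=
  stmt12_general F' F K S
end

section
/- Let q be a prime power, n ≥ 1, and let S be a semifield multiplication on F_{q^n} over F_q, i.e., a presemifield multiplication possessing a two-sided identity element. Suppose the middle nucleus N_m(S) = {z : S(S(x,z),y) = S(x,S(z,y)) for all x, y} has q^{n/m} elements and the right nucleus N_r(S) = {z : S(S(x,y),z) = S(x,S(y,z)) for all x, y} has q^{n/r} elements (so that S has dimension m over its middle nucleus and dimension r over its right nucleus). Then brk(S) ≤ min{m, r}. -/
open Module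

theorem Module.finrank_eq_of_natCard_eq_pow {N V : Type*} [DivisionRing N] [Finite N]
    [AddCommGroup V] [Module N V] [Module.Finite N V] {m : ℕ}
    (h : Nat.card V = Nat.card N ^ m) : finrank N V = m :=
  Nat.pow_right_injective Finite.one_lt_card (Module.natCard_eq_pow_finrank.symm.trans h)

section ModuleVia

variable {F N M : Type*} [CommSemiring F] [Semiring N] [Algebra F N] [AddCommGroup M]
  [Module F M]

def ModuleVia (_ρ : N →ₐ[F] Module.End F M) : Type _ := M

namespace ModuleVia

variable (ρ : N →ₐ[F] Module.End F M)

instance : AddCommGroup (ModuleVia ρ) := inferInstanceAs (AddCommGroup M)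

instance : Module F (ModuleVia ρ) := inferInstanceAs (Module F M)

instance : Module N (ModuleVia ρ) := Module.compHom M (ρ : N →+* Module.End F M)

instance : IsScalarTower F N (ModuleVia ρ) :=
  ⟨fun a z x => show ρ (a • z) x = a • ρ z x by rw [map_smul]; rfl⟩

instance [Finite M] : Finite (ModuleVia ρ) := inferInstanceAs (Finite M)

end ModuleVia

end ModuleVia

theorem exists_linearEquiv_map_smul_eq {F N M : Type*} [CommSemiring F] [DivisionRing N] [Finite N]
    [Algebra F N] [AddCommGroup M] [Module F M] [Module N M] [IsScalarTower F N M] [Finite M]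
    (ρ : N →ₐ[F] Module.End F M) : ∃ T : M ≃ₗ[F] M, ∀ (z : N) (x : M), T (z • x) = ρ z (T x) := by
  have : Module.Finite N M := Module.Finite.of_finite
  have : Module.Finite N (ModuleVia ρ) := Module.Finite.of_finite
  have hrank : finrank N M = finrank N (ModuleVia ρ) :=
    (finrank_eq_of_natCard_eq_pow (V := ModuleVia ρ)
      (Module.natCard_eq_pow_finrank (K := N) (V := M))).symm
  let E : M ≃ₗ[N] ModuleVia ρ := LinearEquiv.ofFinrankEq _ _ hrank
  exact ⟨E.restrictScalars F, E.map_smul⟩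

theorem exists_sum_mul_of_balanced {F N K ι : Type*} [CommSemiring F] [CommSemiring N] [Semiring K]
    [Algebra F N] [Algebra N K] [Algebra F K] [IsScalarTower F N K] [Fintype ι]
    (b : Basis ι N K) (B : K →ₗ[F] K →ₗ[F] K) (hB : ∀ (z : N) x y, B (z • x) y = B x (z • y)) :
    ∃ f g : ι → K →ₗ[F] K, ∀ x y, B x y = ∑ i, g i (f i x * y) := by
  refine ⟨fun i => ((Algebra.linearMap N K) ∘ₗ b.coord i).restrictScalars F, fun i => B (b i),
    fun x y => ?_⟩
  conv_lhs => rw [← b.sum_repr x]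
  simp only [map_sum, LinearMap.sum_apply, hB]
  simp [Algebra.smul_def]

theorem exists_sum_mul_of_linear_right {F N K ι : Type*} [CommSemiring F] [Field N] [Field K]
    [Algebra F N] [Algebra N K] [Algebra F K] [IsScalarTower F N K] [FiniteDimensional N K]
    [Algebra.IsSeparable N K] [Fintype ι] (b : Basis ι N K) (B : K →ₗ[F] K →ₗ[F] K)
    (hB : ∀ (z : N) x y, B x (z • y) = z • B x y) :
    ∃ f g : ι → K →ₗ[F] K, ∀ x y, B x y = ∑ i, g i (f i x * y) := by
  let τ := (Algebra.traceForm N K).toDual (traceForm_nondegenerate N K)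
  let B' : K →ₗ[F] K →ₗ[N] K :=
    { toFun x := { toFun := B x, map_add' := (B x).map_add, map_smul' := fun z y => hB z x y }
      map_add' := fun x x' => by ext; simp
      map_smul' := fun a x => by ext; simp }
  refine ⟨fun i => (τ.symm.toLinearMap.restrictScalars F) ∘ₗ
      LinearMap.compRight F (b.coord i) ∘ₗ B',
    fun i => ((Algebra.trace N K).smulRight (b i)).restrictScalars F, fun x y => ?_⟩
  conv_lhs => rw [← b.sum_repr (B x y)]
  refine Finset.sum_congr rfl fun i _ => ?_
  show _ = Algebra.trace N K (τ.symm (b.coord i ∘ₗ B' x) * y) • b i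
  rw [← Algebra.traceForm_apply, ← LinearMap.BilinForm.toDual_def (traceForm_nondegenerate N K),
    τ.apply_symm_apply]
  rfl

theorem FiniteField.nonempty_algHom_of_natCard_eq_pow {F N K : Type*} [Field F] [Field N]
    [Field K] [Algebra F N] [Algebra F K] [Finite N] [Finite K] {m : ℕ}
    (h : Nat.card K = Nat.card N ^ m) : Nonempty (N →ₐ[F] K) := by
  have := Finite.of_injective _ (algebraMap F K).injective
  have := Module.finite_of_finite F (M := N)
  have := Module.finite_of_finite F (M := K)
  refine nonempty_algHom_of_finrank_dvd
    ⟨m, Nat.pow_right_injective (Finite.one_lt_card (α := F)) ?_⟩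
  simp only [pow_mul, ← natCard_eq_pow_finrank, h]

section RightActingSubring

variable {F K : Type*} [CommRing F] [AddCommGroup K] [Module F K] (S : K →ₗ[F] K →ₗ[F] K)

def middleNucleus : Submodule F K where
  carrier := {z | ∀ x y, S (S x z) y = S x (S z y)}
  add_mem' ha hb x y := by simp only [map_add, LinearMap.add_apply, ha x y, hb x y]
  zero_mem' x y := by simp
  smul_mem' c a ha x y := by simp only [map_smul, LinearMap.smul_apply, ha x y]

def rightNucleus : Submodule F K where
  carrier := {z | ∀ x y, S (S x y) z = S x (S y z)}
  add_mem' ha hb x y := by simp only [map_add, ha x y, hb x y]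
  zero_mem' x y := by simp
  smul_mem' c a ha x y := by simp only [map_smul, ha x y]

structure IsRightActingSubring (e : K) (P : Submodule F K) : Prop where
  one_mem : e ∈ P
  mul_mem ⦃z z' : K⦄ : z ∈ P → z' ∈ P → S z z' ∈ P
  mul_assoc (x : K) ⦃z z' : K⦄ : z ∈ P → z' ∈ P → S (S x z) z' = S x (S z z')

namespace IsRightActingSubring

variable {S} {e : K} {P : Submodule F K} (hP : IsRightActingSubring S e P)
  (he : ∀ x, S e x = x ∧ S x e = x)

abbrev ring : Ring P :=
  { P.addCommGroup with
    mul z z' := ⟨S z z', hP.mul_mem z.2 z'.2⟩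
    one := ⟨e, hP.one_mem⟩
    left_distrib a b c := Subtype.ext (map_add (S a) b.1 c.1)
    right_distrib a b c := Subtype.ext (LinearMap.map_add₂ S a.1 b.1 c.1)
    zero_mul a := Subtype.ext (LinearMap.map_zero₂ S a.1)
    mul_zero a := Subtype.ext (map_zero (S a.1))
    mul_assoc a b c := Subtype.ext (hP.mul_assoc a b.2 c.2)
    one_mul a := Subtype.ext (he a).1
    mul_one a := Subtype.ext (he a).2 }

variable [Nontrivial K] [Finite K] (hpre : ∀ x y, S x y = 0 → x = 0 ∨ y = 0)

noncomputable abbrev field : Field P :=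
  letI := hP.ring he
  have : Nontrivial P := ⟨⟨1, 0, fun h => by
    obtain ⟨x, hx⟩ := exists_ne (0 : K)
    have he0 : e = 0 := congrArg Subtype.val h
    exact hx (by simpa [he0] using ((he x).1).symm)⟩⟩
  have : NoZeroDivisors P :=
    ⟨fun {a b} h => (hpre a b (congrArg Subtype.val h)).imp Subtype.ext Subtype.ext⟩
  have : IsDomain P := NoZeroDivisors.to_isDomain P
  (Finite.isDomain_to_isField P).toField

noncomputable abbrev algebra : letI := hP.field he hpre; Algebra F P :=
  letI := hP.field he hpre
  Algebra.ofModule (fun a z z' => Subtype.ext (LinearMap.map_smul₂ S a z.1 z'.1))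
    (fun a z z' => Subtype.ext (map_smul (S z.1) a z'.1))

noncomputable def rightMul :
    letI := hP.field he hpre; letI := hP.algebra he hpre; P →ₐ[F] Module.End F K :=
  letI := hP.field he hpre
  letI := hP.algebra he hpre
  AlgHom.ofLinearMap (S.flip ∘ₗ P.subtype) (LinearMap.ext fun x => (he x).2) fun z z' =>
    LinearMap.ext fun x => by
      show S x (z * z' : P) = S (S x z') z
      -- `x ↦ S x z` reverses products, which is harmless as `P` is commutative
      rw [mul_comm z z']
      exact (hP.mul_assoc x z'.2 z.2).symm

end IsRightActingSubring

end RightActingSubring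

theorem mem_brkSet_of_balanced {F K N : Type} [Field F] [Field K] [Algebra F K] [Finite K]
    [Field N] [Finite N] [Algebra F N] (S : K →ₗ[F] K →ₗ[F] K) (ρ₁ ρ₂ : N →ₐ[F] Module.End F K)
    (hS : ∀ z x y, S (ρ₁ z x) y = S x (ρ₂ z y)) {m : ℕ} (hm : Nat.card K = Nat.card N ^ m) :
    m ∈ brkSet F K (fun x y => S x y) := by
  obtain ⟨φ⟩ := FiniteField.nonempty_algHom_of_natCard_eq_pow (F := F) hm
  algebraize [φ.toRingHom]
  obtain ⟨T₁, hT₁⟩ := exists_linearEquiv_map_smul_eq ρ₁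
  obtain ⟨T₂, hT₂⟩ := exists_linearEquiv_map_smul_eq ρ₂
  obtain ⟨f, g, hfg⟩ := exists_sum_mul_of_balanced
    (finBasisOfFinrankEq N K (finrank_eq_of_natCard_eq_pow hm))
    (S.compl₁₂ T₁.toLinearMap T₂.toLinearMap) (fun z x y => by simp [hT₁, hT₂, hS])
  exact ⟨_, f, g, ⟨T₁.symm, T₂.symm, LinearEquiv.refl F K, fun x y => by simp⟩, hfg⟩

theorem mem_brkSet_of_linear_right {F K N : Type} [Field F] [Field K] [Algebra F K] [Finite K]
    [Field N] [Finite N] [Algebra F N] (S : K →ₗ[F] K →ₗ[F] K) (ρ : N →ₐ[F] Module.End F K)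
    (hS : ∀ z x y, S x (ρ z y) = ρ z (S x y)) {m : ℕ} (hm : Nat.card K = Nat.card N ^ m) :
    m ∈ brkSet F K (fun x y => S x y) := by
  obtain ⟨φ⟩ := FiniteField.nonempty_algHom_of_natCard_eq_pow (F := F) hm
  algebraize [φ.toRingHom]
  obtain ⟨T, hT⟩ := exists_linearEquiv_map_smul_eq ρ
  obtain ⟨f, g, hfg⟩ := exists_sum_mul_of_linear_right
    (finBasisOfFinrankEq N K (finrank_eq_of_natCard_eq_pow hm))
    ((S.compl₂ T.toLinearMap).compr₂ T.symm.toLinearMap) (fun z x y => by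
      simp only [LinearMap.compr₂_apply, LinearMap.compl₂_apply, LinearEquiv.coe_coe, hT, hS]
      exact T.symm_apply_eq.mpr (by rw [hT, T.apply_symm_apply]))
  exact ⟨_, f, g, ⟨LinearEquiv.refl F K, T.symm, T.symm, fun x y => by simp⟩, hfg⟩

section Nuclei

variable {F K : Type} [Field F] [Field K] [Algebra F K] [Finite K] {S : K →ₗ[F] K →ₗ[F] K}
  (hpre : ∀ x y, S x y = 0 → x = 0 ∨ y = 0) {e : K} (he : ∀ x, S e x = x ∧ S x e = x)
include hpre he

theorem mem_brkSet_of_natCard_middleNucleus {m : ℕ}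
    (hm : Nat.card K = Nat.card (middleNucleus S) ^ m) : m ∈ brkSet F K (fun x y => S x y) := by
  have hP : IsRightActingSubring S e (middleNucleus S) :=
    { one_mem := fun x y => by rw [(he x).2, (he y).1]
      mul_mem := fun z z' hz hz' x y => calc
        S (S x (S z z')) y = S (S (S x z) z') y := by rw [hz x z']
        _ = S x (S z (S z' y)) := by rw [hz' (S x z) y, hz x (S z' y)]
        _ = S x (S (S z z') y) := by rw [hz' z y]
      mul_assoc := fun x _ z' hz _ => hz x z' }
  let := hP.field he hpre
  let := hP.algebra he hpre
  let leftMul : middleNucleus S →ₐ[F] Module.End F K :=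
    AlgHom.ofLinearMap (S ∘ₗ (middleNucleus S).subtype) (LinearMap.ext fun y => (he y).1)
      fun z z' => LinearMap.ext fun y => z'.2 z y
  exact mem_brkSet_of_balanced S (hP.rightMul he hpre) leftMul (fun z x y => z.2 x y) hm

theorem mem_brkSet_of_natCard_rightNucleus {r : ℕ}
    (hr : Nat.card K = Nat.card (rightNucleus S) ^ r) : r ∈ brkSet F K (fun x y => S x y) := by
  have hP : IsRightActingSubring S e (rightNucleus S) :=
    { one_mem := fun x y => by rw [(he _).2, (he y).2]
      mul_mem := fun z z' hz hz' x y => calc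
        S (S x y) (S z z') = S (S (S x y) z) z' := (hz' (S x y) z).symm
        _ = S x (S (S y z) z') := by rw [hz x y, hz' x (S y z)]
        _ = S x (S y (S z z')) := by rw [hz' y z]
      mul_assoc := fun x _ _ _ hz' => hz' x _ }
  let := hP.field he hpre
  let := hP.algebra he hpre
  exact mem_brkSet_of_linear_right S (hP.rightMul he hpre) (fun z x y => (z.2 x y).symm) hr

end Nuclei

theorem stmt17_general (q n : ℕ)
    (F K : Type) [Field F] [Field K] [Algebra F K] [Fintype K]
    (hcK : Fintype.card K = q ^ n)
    (S : K →ₗ[F] K →ₗ[F] K)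
    (hpre : ∀ x y : K, S x y = 0 → x = 0 ∨ y = 0)
    (e : K) (he : ∀ x : K, S e x = x ∧ S x e = x)
    (m r : ℕ) (hmn : m ∣ n) (hrn : r ∣ n)
    (hNm : Nat.card {z : K // ∀ x y : K, S (S x z) y = S x (S z y)} = q ^ (n / m))
    (hNr : Nat.card {z : K // ∀ x y : K, S (S x y) z = S x (S y z)} = q ^ (n / r)) :
    sInf (brkSet F K (fun x y => S x y)) ≤ min m r := by
  have hcard : ∀ k, k ∣ n → Nat.card K = (q ^ (n / k)) ^ k := fun k hk => by
    rw [← pow_mul, Nat.div_mul_cancel hk, Nat.card_eq_fintype_card, hcK]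
  have hm : m ∈ brkSet F K (fun x y => S x y) :=
    mem_brkSet_of_natCard_middleNucleus hpre he (hNm ▸ hcard m hmn)
  have hr : r ∈ brkSet F K (fun x y => S x y) :=
    mem_brkSet_of_natCard_rightNucleus hpre he (hNr ▸ hcard r hrn)
  rcases min_choice m r with h | h <;> rw [h]
  exacts [Nat.sInf_le hm, Nat.sInf_le hr]

/-- if a semifield `S` has dimension `m` over its middle nucleus and
dimension `r` over its right nucleus, then `brk(S) ≤ min m r`. -/
theorem stmt17 (q n : ℕ) (hq : IsPrimePow q) (hn : 1 ≤ n)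
    (F K : Type) [Field F] [Field K] [Algebra F K] [Fintype F] [Fintype K]
    (hcF : Fintype.card F = q) (hcK : Fintype.card K = q ^ n)
    (S : K →ₗ[F] K →ₗ[F] K)
    (hpre : ∀ x y : K, S x y = 0 → x = 0 ∨ y = 0)
    (e : K) (he : ∀ x : K, S e x = x ∧ S x e = x)
    (m r : ℕ) (hm1 : 1 ≤ m) (hr1 : 1 ≤ r) (hmn : m ∣ n) (hrn : r ∣ n)
    (hNm : Nat.card {z : K // ∀ x y : K, S (S x z) y = S x (S z y)} = q ^ (n / m))
    (hNr : Nat.card {z : K // ∀ x y : K, S (S x y) z = S x (S y z)} = q ^ (n / r)) :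
    sInf (brkSet F K (fun x y => S x y)) ≤ min m r :=
  stmt17_general q n F K hcK S hpre e he m r hmn hrn hNm hNr
end
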